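/- arXiv:1303.4935 — 9 statements merged into one kernel-verified Lean document; each statement's English description precedes it below -/
import Mathlib

section
/- Let (G, Ḡ, G*, φ₊, φ₋) be a factorized group. Define xR(x,y) = ψ⁻¹(φ₋(x) ψ(y) φ₋(x)⁻¹) and xL(x,y) = ψ⁻¹(φ₊(xR(x,y))⁻¹ ψ(x) φ₊(xR(x,y))). Then the map R : G* × G* → G* × G* given by R(x,y) = (xL(x,y), xR(x,y)) satisfies the set-theoretical Yang–Baxter equation R₂₃ R₁₃ R₁₂ = R₁₂ R₁₃ R₂₃ on G* × G* × G*. -/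
/-- A factorized group: groups `Gb` (Ḡ) and `Gs` (G*), a normal subgroup `G` of `Gb`,
and group homomorphisms `φp, φm : Gs → Gb` such that `ψ x = φp x * (φm x)⁻¹` is a
bijection from `Gs` onto `G`. -/
structure FactorizedGroup (Gb Gs : Type*) [Group Gb] [Group Gs] where
  G : Subgroup Gb
  normal : G.Normal
  φp : Gs →* Gb
  φm : Gs →* Gb
  mem_G : ∀ x : Gs, φp x * (φm x)⁻¹ ∈ G
  bij : Function.Bijective (fun x : Gs => (⟨φp x * (φm x)⁻¹, mem_G x⟩ : G))

namespace FactorizedGroup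

variable {Gb Gs : Type*} [Group Gb] [Group Gs] (FG : FactorizedGroup Gb Gs)

/-- The map `ψ : G* → Ḡ`. -/
def ψ (x : Gs) : Gb := FG.φp x * (FG.φm x)⁻¹

/-- The inverse of `ψ` (defined on the image `G` of `ψ`). -/
noncomputable def ψinv (g : Gb) : Gs :=
  haveI : Nonempty Gs := ⟨1⟩
  Function.invFun FG.ψ g

/-- `xR(x,y) = ψ⁻¹(φ₋(x) ψ(y) φ₋(x)⁻¹)`. -/
noncomputable def xR (x y : Gs) : Gs := FG.ψinv (FG.φm x * FG.ψ y * (FG.φm x)⁻¹)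

/-- `xL(x,y) = ψ⁻¹(φ₊(xR(x,y))⁻¹ ψ(x) φ₊(xR(x,y)))`. -/
noncomputable def xL (x y : Gs) : Gs :=
  FG.ψinv ((FG.φp (FG.xR x y))⁻¹ * FG.ψ x * FG.φp (FG.xR x y))

/-- The Yang–Baxter map `R(x,y) = (xL(x,y), xR(x,y))`. -/
noncomputable def Rmap : Gs × Gs → Gs × Gs := fun p => (FG.xL p.1 p.2, FG.xR p.1 p.2)

end FactorizedGroup

/-- `R₁₂`: apply `R` to the first two factors. -/
def map12 {H : Type*} (R : H × H → H × H) : H × H × H → H × H × H :=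
  fun p => ((R (p.1, p.2.1)).1, (R (p.1, p.2.1)).2, p.2.2)

/-- `R₁₃`: apply `R` to the first and third factors. -/
def map13 {H : Type*} (R : H × H → H × H) : H × H × H → H × H × H :=
  fun p => ((R (p.1, p.2.2)).1, p.2.1, (R (p.1, p.2.2)).2)

/-- `R₂₃`: apply `R` to the last two factors. -/
def map23 {H : Type*} (R : H × H → H × H) : H × H × H → H × H × H :=
  fun p => (p.1, R (p.2.1, p.2.2))

/-! `xR x y = x ▹ y` for the left action of `G*` on itself obtained by transporting the
conjugation action `g ↦ φ₋(x) g φ₋(x)⁻¹` of `G*` on `G` along `ψ`, and `xR x y * xL x y = x * y`.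
The third component of the Yang–Baxter equation is then the action law
`(x ▹ y) ▹ (xL x y ▹ z) = (x * y) ▹ z = x ▹ (y ▹ z)`, and the first component follows from the
other two because, for any map with `R(x,y).2 * R(x,y).1 = x * y`, both sides of the equation send
`(x, y, z)` to triples `(a, b, c)` with `c * b * a = x * y * z`. For the second component one
compares images under `ψ`, using `φ₊(xR x y) φ₋(xL x y) = φ₋(x) φ₊(y)`. -/

section YangBaxter

variable {H : Type*} [Group H] (R : H × H → H × H)

theorem map23_map13_map12_prod (hR : ∀ p, (R p).2 * (R p).1 = p.1 * p.2) (x y z : H) :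
    let q := (map23 R ∘ map13 R ∘ map12 R) (x, y, z)
    q.2.2 * q.2.1 * q.1 = x * y * z := by
  simp only [map12, map13, map23, Function.comp, hR, mul_assoc]
  rw [← mul_assoc, hR]
  exact mul_assoc x y z

theorem map12_map13_map23_prod (hR : ∀ p, (R p).2 * (R p).1 = p.1 * p.2) (x y z : H) :
    let q := (map12 R ∘ map13 R ∘ map23 R) (x, y, z)
    q.2.2 * q.2.1 * q.1 = x * y * z := by
  simp only [map12, map13, map23, Function.comp, hR, mul_assoc]
  rw [← mul_assoc, hR, mul_assoc, hR]

theorem yangBaxter_of_snd_mul_fst (hR : ∀ p, (R p).2 * (R p).1 = p.1 * p.2)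
    (h : ∀ p, ((map23 R ∘ map13 R ∘ map12 R) p).2 = ((map12 R ∘ map13 R ∘ map23 R) p).2) :
    map23 R ∘ map13 R ∘ map12 R = map12 R ∘ map13 R ∘ map23 R := by
  funext ⟨x, y, z⟩
  refine Prod.ext ?_ (h _)
  have hl := map23_map13_map12_prod R hR x y z
  have hr := map12_map13_map23_prod R hR x y z
  simp only at hl hr
  rw [← hr, h, mul_right_inj] at hl
  exact hl

end YangBaxter

namespace FactorizedGroup

variable {Gb Gs : Type*} [Group Gb] [Group Gs] (FG : FactorizedGroup Gb Gs)

theorem ψ_injective : Function.Injective FG.ψ := fun _ _ h => FG.bij.1 (Subtype.ext h)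

theorem ψ_ψinv {g : Gb} (hg : g ∈ FG.G) : FG.ψ (FG.ψinv g) = g := by
  obtain ⟨x, hx⟩ := FG.bij.2 ⟨g, hg⟩
  exact Function.invFun_eq ⟨x, congrArg Subtype.val hx⟩

theorem ψ_mem (x : Gs) : FG.ψ x ∈ FG.G := FG.mem_G x

theorem ψ_mul (x y : Gs) : FG.ψ (x * y) = FG.φp x * FG.ψ y * (FG.φm x)⁻¹ := by
  simp only [ψ, map_mul, mul_inv_rev, mul_assoc]

theorem ψ_xR (x y : Gs) : FG.ψ (FG.xR x y) = FG.φm x * FG.ψ y * (FG.φm x)⁻¹ :=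
  FG.ψ_ψinv (FG.normal.conj_mem _ (FG.ψ_mem y) (FG.φm x))

theorem ψ_xL (x y : Gs) :
    FG.ψ (FG.xL x y) = (FG.φp (FG.xR x y))⁻¹ * FG.ψ x * FG.φp (FG.xR x y) :=
  FG.ψ_ψinv <| by
    simpa only [inv_inv] using FG.normal.conj_mem _ (FG.ψ_mem x) (FG.φp (FG.xR x y))⁻¹

theorem xR_mul_xL (x y : Gs) : FG.xR x y * FG.xL x y = x * y := by
  apply FG.ψ_injective
  calc FG.ψ (FG.xR x y * FG.xL x y)
      = FG.ψ x * FG.ψ (FG.xR x y) := by rw [ψ_mul, ψ_xL]; simp only [ψ]; group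
    _ = FG.ψ (x * y) := by rw [ψ_xR, ψ_mul]; simp only [ψ]; group

theorem xR_mul (x y z : Gs) : FG.xR (x * y) z = FG.xR x (FG.xR y z) := by
  apply FG.ψ_injective
  rw [ψ_xR, ψ_xR, ψ_xR, map_mul]
  group

theorem xR_xR_xL (x y z : Gs) :
    FG.xR (FG.xR x y) (FG.xR (FG.xL x y) z) = FG.xR x (FG.xR y z) := by
  rw [← xR_mul, xR_mul_xL, xR_mul]

theorem φp_xR_mul_φm_xL (x y : Gs) :
    FG.φp (FG.xR x y) * FG.φm (FG.xL x y) = FG.φm x * FG.φp y :=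
  calc FG.φp (FG.xR x y) * FG.φm (FG.xL x y)
      = FG.ψ (FG.xR x y) * FG.φm (FG.xR x y * FG.xL x y) := by rw [map_mul, ψ]; group
    _ = FG.φm x * FG.φp y := by rw [ψ_xR, xR_mul_xL, ψ, map_mul]; group

theorem xL_xR_xR_xL (x y z : Gs) :
    FG.xL (FG.xR x y) (FG.xR (FG.xL x y) z) = FG.xR (FG.xL x (FG.xR y z)) (FG.xL y z) := by
  apply FG.ψ_injective
  rw [ψ_xL, xR_xR_xL, ψ_xR, ψ_xR, ψ_xL,
    eq_inv_mul_of_mul_eq (FG.φp_xR_mul_φm_xL x (FG.xR y z))]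
  group

theorem Rmap_snd_mul_fst (p : Gs × Gs) : (FG.Rmap p).2 * (FG.Rmap p).1 = p.1 * p.2 :=
  FG.xR_mul_xL p.1 p.2

end FactorizedGroup

/-- The map `R(x,y) = (xL(x,y), xR(x,y))` associated to a factorized group satisfies the
set-theoretical Yang–Baxter equation `R₂₃ R₁₃ R₁₂ = R₁₂ R₁₃ R₂₃`. -/
theorem factorizedGroup_yangBaxter {Gb Gs : Type*} [Group Gb] [Group Gs]
    (FG : FactorizedGroup Gb Gs) :
    map23 FG.Rmap ∘ map13 FG.Rmap ∘ map12 FG.Rmap =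
      map12 FG.Rmap ∘ map13 FG.Rmap ∘ map23 FG.Rmap :=
  yangBaxter_of_snd_mul_fst FG.Rmap FG.Rmap_snd_mul_fst fun ⟨x, y, z⟩ =>
    Prod.ext (FG.xL_xR_xR_xL x y z) (FG.xR_xR_xL x y z)
end

section
/- Let (G, Ḡ, G*, φ₊, φ₋) be a factorized group with bijection ψ. For x, y ∈ G*, the pair (x', y') = (xL(x,y), xR(x,y)) is the unique pair in G* × G* satisfying the system: y'x' = xy in G* and φ₊(y')φ₋(x') = φ₋(x)φ₊(y) in Ḡ. -/
namespace FactorizedGroup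

variable {Gb Gs : Type*} [Group Gb] [Group Gs] (FG : FactorizedGroup Gb Gs)

theorem ψinv_eq_iff {g : Gb} (hg : g ∈ FG.G) {z : Gs} : FG.ψinv g = z ↔ FG.ψ z = g :=
  ⟨fun h => h ▸ FG.ψ_ψinv hg, fun h => FG.ψ_injective (by rw [FG.ψ_ψinv hg, h])⟩

theorem conj_ψ_mem (g : Gb) (x : Gs) : g * FG.ψ x * g⁻¹ ∈ FG.G :=
  FG.normal.conj_mem _ (FG.mem_G x) g

theorem xR_eq_iff {x y z : Gs} :
    FG.xR x y = z ↔ FG.ψ z = FG.φm x * FG.ψ y * (FG.φm x)⁻¹ :=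
  FG.ψinv_eq_iff (FG.conj_ψ_mem _ y)

theorem xL_eq_iff {x y z : Gs} :
    FG.xL x y = z ↔ FG.ψ z = (FG.φp (FG.xR x y))⁻¹ * FG.ψ x * FG.φp (FG.xR x y) := by
  have hmem := FG.conj_ψ_mem (FG.φp (FG.xR x y))⁻¹ x
  rw [inv_inv] at hmem
  exact FG.ψinv_eq_iff hmem

section

variable {x y x' y' : Gs}

theorem φp_mul_φm_eq_iff_ψ_left (h : y' * x' = x * y) :
    FG.φp y' * FG.φm x' = FG.φm x * FG.φp y ↔
      FG.ψ y' = FG.φm x * FG.ψ y * (FG.φm x)⁻¹ := by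
  have hm : FG.φm y' = FG.φm x * FG.φm y * (FG.φm x')⁻¹ := by
    rw [← map_inv, ← map_mul, ← map_mul, ← eq_mul_inv_of_mul_eq h]
  have hy' : FG.ψ y' = FG.φp y' * FG.φm x' * (FG.φm x * FG.φm y)⁻¹ := by
    rw [ψ, hm]; group
  have hconj : FG.φm x * FG.ψ y * (FG.φm x)⁻¹ = FG.φm x * FG.φp y * (FG.φm x * FG.φm y)⁻¹ := by
    rw [ψ]; group
  rw [hy', hconj, mul_left_inj]

theorem φp_mul_φm_eq_iff_ψ_right (h : y' * x' = x * y) :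
    FG.φp y' * FG.φm x' = FG.φm x * FG.φp y ↔
      FG.ψ x' = (FG.φp y')⁻¹ * FG.ψ x * FG.φp y' := by
  set c := (FG.φp y')⁻¹ * FG.φp x * (FG.φm x)⁻¹ with hc
  have hp : FG.φp x' = (FG.φp y')⁻¹ * (FG.φp x * FG.φp y) := by
    rw [← map_inv, ← map_mul, ← map_mul, ← eq_inv_mul_of_mul_eq h]
  have hx' : FG.ψ x' = c * (FG.φm x * FG.φp y) * (FG.φm x')⁻¹ := by
    rw [ψ, hp, hc]; group
  have hconj : (FG.φp y')⁻¹ * FG.ψ x * FG.φp y' = c * (FG.φp y' * FG.φm x') * (FG.φm x')⁻¹ := by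
    rw [ψ, hc]; group
  rw [hx', hconj, mul_left_inj, mul_right_inj, eq_comm]

theorem system_iff :
    (y' * x' = x * y ∧ FG.φp y' * FG.φm x' = FG.φm x * FG.φp y) ↔
      (x' = y'⁻¹ * (x * y) ∧ y' = FG.xR x y) := by
  rw [eq_comm (a := y'), xR_eq_iff, eq_inv_mul_iff_mul_eq]
  exact and_congr_right FG.φp_mul_φm_eq_iff_ψ_left

end

theorem xL_eq_xR_inv_mul (x y : Gs) : FG.xL x y = (FG.xR x y)⁻¹ * (x * y) := by
  have h : FG.xR x y * ((FG.xR x y)⁻¹ * (x * y)) = x * y := mul_inv_cancel_left _ _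
  rw [xL_eq_iff, ← FG.φp_mul_φm_eq_iff_ψ_right h, FG.φp_mul_φm_eq_iff_ψ_left h, ← xR_eq_iff]

end FactorizedGroup

/-- `(xL(x,y), xR(x,y))` is the unique pair `(x', y')` with `y'x' = xy` in `G*` and
`φ₊(y')φ₋(x') = φ₋(x)φ₊(y)` in `Ḡ`. -/
theorem factorizedGroup_xL_xR_unique {Gb Gs : Type*} [Group Gb] [Group Gs]
    (FG : FactorizedGroup Gb Gs) (x y x' y' : Gs) :
    (y' * x' = x * y ∧ FG.φp y' * FG.φm x' = FG.φm x * FG.φp y) ↔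
      (x' = FG.xL x y ∧ y' = FG.xR x y) := by
  rw [FG.system_iff]
  exact and_congr_left fun hy' => by rw [hy', FG.xL_eq_xR_inv_mul]
end

section
/- Let (G, Ḡ, G*, φ₊, φ₋) be a factorized group, Y ⊂ G a union of conjugacy classes of Ḡ (i.e., Y is stable under conjugation by Ḡ and contained in G), and Y* = ψ⁻¹(Y). Then the Yang–Baxter map R(x,y) = (xL(x,y), xR(x,y)) restricts to a bijection Y* × Y* → Y* × Y*. -/
namespace FactorizedGroup

variable {Gb Gs : Type*} [Group Gb] [Group Gs] (FG : FactorizedGroup Gb Gs)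

noncomputable def conj (h : Gb) (x : Gs) : Gs := FG.ψinv (h * FG.ψ x * h⁻¹)

theorem ψ_conj (h : Gb) (x : Gs) : FG.ψ (FG.conj h x) = h * FG.ψ x * h⁻¹ :=
  FG.ψ_ψinv (FG.normal.conj_mem _ (FG.mem_G x) h)

theorem conj_inv_conj (h : Gb) (x : Gs) : FG.conj h⁻¹ (FG.conj h x) = x :=
  FG.ψ_injective <| by rw [ψ_conj, ψ_conj]; group

theorem conj_conj_inv (h : Gb) (x : Gs) : FG.conj h (FG.conj h⁻¹ x) = x := by
  simpa using FG.conj_inv_conj h⁻¹ x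

theorem conj_mem_preimage {Y : Set Gb} (hconj : ∀ g ∈ Y, ∀ h : Gb, h * g * h⁻¹ ∈ Y)
    (h : Gb) {x : Gs} (hx : x ∈ FG.ψ ⁻¹' Y) : FG.conj h x ∈ FG.ψ ⁻¹' Y := by
  simpa only [Set.mem_preimage, ψ_conj] using hconj _ hx h

theorem xR_eq_conj (x y : Gs) : FG.xR x y = FG.conj (FG.φm x) y := rfl

theorem xL_eq_conj (x y : Gs) : FG.xL x y = FG.conj (FG.φp (FG.xR x y))⁻¹ x := by
  rw [conj, inv_inv]; rfl

noncomputable def Rinv (p : Gs × Gs) : Gs × Gs :=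
  let x := FG.conj (FG.φp p.2) p.1
  (x, FG.conj (FG.φm x)⁻¹ p.2)

theorem Rinv_Rmap (p : Gs × Gs) : FG.Rinv (FG.Rmap p) = p := by
  obtain ⟨x, y⟩ := p
  have hx : FG.conj (FG.φp (FG.xR x y)) (FG.xL x y) = x := by
    rw [xL_eq_conj, conj_conj_inv]
  change (FG.conj (FG.φp (FG.xR x y)) (FG.xL x y),
    FG.conj (FG.φm (FG.conj (FG.φp (FG.xR x y)) (FG.xL x y)))⁻¹ (FG.xR x y)) = (x, y)
  rw [hx, xR_eq_conj, conj_inv_conj]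

theorem Rmap_Rinv (p : Gs × Gs) : FG.Rmap (FG.Rinv p) = p := by
  obtain ⟨u, v⟩ := p
  set x := FG.conj (FG.φp v) u
  have hR : FG.xR x (FG.conj (FG.φm x)⁻¹ v) = v := by rw [xR_eq_conj, conj_conj_inv]
  change (FG.xL x (FG.conj (FG.φm x)⁻¹ v), FG.xR x (FG.conj (FG.φm x)⁻¹ v)) = (u, v)
  rw [xL_eq_conj, hR, conj_inv_conj]

theorem mapsTo_Rmap {Y : Set Gb} (hconj : ∀ g ∈ Y, ∀ h : Gb, h * g * h⁻¹ ∈ Y) :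
    Set.MapsTo FG.Rmap ((FG.ψ ⁻¹' Y) ×ˢ (FG.ψ ⁻¹' Y)) ((FG.ψ ⁻¹' Y) ×ˢ (FG.ψ ⁻¹' Y)) := by
  rintro ⟨x, y⟩ ⟨hx, hy⟩
  rw [Rmap, Set.mem_prod, xL_eq_conj, xR_eq_conj]
  exact ⟨FG.conj_mem_preimage hconj _ hx, FG.conj_mem_preimage hconj _ hy⟩

theorem mapsTo_Rinv {Y : Set Gb} (hconj : ∀ g ∈ Y, ∀ h : Gb, h * g * h⁻¹ ∈ Y) :
    Set.MapsTo FG.Rinv ((FG.ψ ⁻¹' Y) ×ˢ (FG.ψ ⁻¹' Y)) ((FG.ψ ⁻¹' Y) ×ˢ (FG.ψ ⁻¹' Y)) :=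
  fun _ ⟨hu, hv⟩ => ⟨FG.conj_mem_preimage hconj _ hu, FG.conj_mem_preimage hconj _ hv⟩

end FactorizedGroup

theorem factorizedGroup_Rmap_bijOn_general {Gb Gs : Type*} [Group Gb] [Group Gs]
    (FG : FactorizedGroup Gb Gs) (Y : Set Gb)
    (hconj : ∀ g ∈ Y, ∀ h : Gb, h * g * h⁻¹ ∈ Y) :
    Set.BijOn FG.Rmap ((FG.ψ ⁻¹' Y) ×ˢ (FG.ψ ⁻¹' Y)) ((FG.ψ ⁻¹' Y) ×ˢ (FG.ψ ⁻¹' Y)) :=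
  Set.InvOn.bijOn ⟨fun p _ => FG.Rinv_Rmap p, fun p _ => FG.Rmap_Rinv p⟩
    (FG.mapsTo_Rmap hconj) (FG.mapsTo_Rinv hconj)

/-- If `Y ⊆ G` is stable under conjugation by `Ḡ` and `Y* = ψ⁻¹(Y)`, then the
Yang–Baxter map `R` restricts to a bijection `Y* × Y* → Y* × Y*`. -/
theorem factorizedGroup_Rmap_bijOn {Gb Gs : Type*} [Group Gb] [Group Gs]
    (FG : FactorizedGroup Gb Gs) (Y : Set Gb)
    (hYG : Y ⊆ (FG.G : Set Gb))
    (hconj : ∀ g ∈ Y, ∀ h : Gb, h * g * h⁻¹ ∈ Y) :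
    Set.BijOn FG.Rmap ((FG.ψ ⁻¹' Y) ×ˢ (FG.ψ ⁻¹' Y)) ((FG.ψ ⁻¹' Y) ×ˢ (FG.ψ ⁻¹' Y)) :=
  factorizedGroup_Rmap_bijOn_general FG Y hconj
end

section
/- With the factorized group (G, Ḡ, G*, φ₊, φ₋) of the Borel of SL₂(ℂ) (where G* = {[[1,ε],[0,κ]] : κ ∈ ℂ*, ε ∈ ℂ}, φ₋ the inclusion, φ₊([[1,ε],[0,κ]]) = [[κ,0],[0,1]]), the Yang–Baxter map R is given explicitly by R([[1,ε₁],[0,κ₁]], [[1,ε₂],[0,κ₂]]) = ([[1, ε₁/κ₂],[0, κ₁]], [[1, (ε₂ + ε₁(κ₂ − κ₂⁻¹))/κ₁],[0, κ₂]]). -/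
open Matrix

noncomputable section

/-- `φ₋ : G* → Ḡ` is the inclusion: the pair `(κ, ε)` corresponds to the matrix
`[[1, ε],[0, κ]]`. -/
def phiM (p : ℂˣ × ℂ) : Matrix (Fin 2) (Fin 2) ℂ := !![1, p.2; 0, (p.1 : ℂ)]

/-- `φ₊([[1, ε],[0, κ]]) = [[κ, 0],[0, 1]]`. -/
def phiP (p : ℂˣ × ℂ) : Matrix (Fin 2) (Fin 2) ℂ := !![(p.1 : ℂ), 0; 0, 1]

/-- `ψ(x) = φ₊(x) φ₋(x)⁻¹`. -/
def psiB (p : ℂˣ × ℂ) : Matrix (Fin 2) (Fin 2) ℂ := phiP p * (phiM p)⁻¹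

/-- The inverse of `ψ` (defined on its image `G`). -/
def psiInvB (A : Matrix (Fin 2) (Fin 2) ℂ) : ℂˣ × ℂ := Function.invFun psiB A

/-- `xR(x,y) = ψ⁻¹(φ₋(x) ψ(y) φ₋(x)⁻¹)`. -/
def xRB (x y : ℂˣ × ℂ) : ℂˣ × ℂ := psiInvB (phiM x * psiB y * (phiM x)⁻¹)

/-- `xL(x,y) = ψ⁻¹(φ₊(xR(x,y))⁻¹ ψ(x) φ₊(xR(x,y)))`. -/
def xLB (x y : ℂˣ × ℂ) : ℂˣ × ℂ :=
  psiInvB ((phiP (xRB x y))⁻¹ * psiB x * phiP (xRB x y))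

/-- The Yang–Baxter map `R(x,y) = (xL(x,y), xR(x,y))`. -/
def RB : (ℂˣ × ℂ) × (ℂˣ × ℂ) → (ℂˣ × ℂ) × (ℂˣ × ℂ) :=
  fun p => (xLB p.1 p.2, xRB p.1 p.2)

/-! Explicitly `ψ(κ, ε) = [[κ, -ε], [0, κ⁻¹]]`, so `ψ` is injective and `ψ⁻¹ (ψ p) = p`. Both
conjugations in the definition of `R` stay in the image of `ψ`: conjugating by `φ₋(x)` keeps `κ`
and transforms `ε` affinely, conjugating by `φ₊(z)` divides `ε` by the `κ` of `z`. -/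

lemma Matrix.of_fin_two_inj {α : Type*} {a b c d a' b' c' d' : α} :
    !![a, b; c, d] = !![a', b'; c', d'] ↔ a = a' ∧ b = b' ∧ c = c' ∧ d = d' := by
  simp only [EmbeddingLike.apply_eq_iff_eq, Matrix.vecCons_inj, and_true, and_assoc]

lemma Matrix.inv_upperTriangular_fin_two {K : Type*} [Field K] {a d : K} (ha : a ≠ 0)
    (hd : d ≠ 0) (b : K) : !![a, b; 0, d]⁻¹ = !![a⁻¹, -b / (a * d); 0, d⁻¹] := by
  apply inv_eq_right_inv
  rw [mul_fin_two, one_fin_two, of_fin_two_inj]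
  refine ⟨?_, ?_, ?_, ?_⟩ <;> field_simp <;> ring

lemma psiB_eq (p : ℂˣ × ℂ) : psiB p = !![(p.1 : ℂ), -p.2; 0, (p.1 : ℂ)⁻¹] := by
  rw [psiB, phiP, phiM, inv_upperTriangular_fin_two one_ne_zero p.1.ne_zero, mul_fin_two,
    of_fin_two_inj]
  refine ⟨?_, ?_, ?_, ?_⟩ <;> field_simp <;> ring

lemma psiB_injective : Function.Injective psiB := by
  intro p q h
  obtain ⟨hκ, hε, -, -⟩ := of_fin_two_inj.mp ((psiB_eq p).symm.trans (h.trans (psiB_eq q)))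
  exact Prod.ext (Units.val_inj.mp hκ) (neg_inj.mp hε)

lemma psiInvB_psiB (p : ℂˣ × ℂ) : psiInvB (psiB p) = p :=
  Function.leftInverse_invFun psiB_injective p

lemma phiM_mul_psiB_mul_phiM_inv (x y : ℂˣ × ℂ) :
    phiM x * psiB y * (phiM x)⁻¹ =
      psiB (y.1, (y.2 + x.2 * ((y.1 : ℂ) - (y.1 : ℂ)⁻¹)) / x.1) := by
  rw [phiM, inv_upperTriangular_fin_two one_ne_zero x.1.ne_zero, psiB_eq, psiB_eq,
    mul_fin_two, mul_fin_two, of_fin_two_inj]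
  refine ⟨?_, ?_, ?_, ?_⟩ <;> field_simp <;> ring

lemma phiP_inv_mul_psiB_mul_phiP (x y : ℂˣ × ℂ) :
    (phiP y)⁻¹ * psiB x * phiP y = psiB (x.1, x.2 / y.1) := by
  rw [phiP, inv_upperTriangular_fin_two y.1.ne_zero one_ne_zero, psiB_eq, psiB_eq,
    mul_fin_two, mul_fin_two, of_fin_two_inj]
  refine ⟨?_, ?_, ?_, ?_⟩ <;> field_simp <;> ring

lemma xRB_eq (x y : ℂˣ × ℂ) :
    xRB x y = (y.1, (y.2 + x.2 * ((y.1 : ℂ) - (y.1 : ℂ)⁻¹)) / x.1) := by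
  rw [xRB, phiM_mul_psiB_mul_phiM_inv, psiInvB_psiB]

lemma xLB_eq (x y : ℂˣ × ℂ) : xLB x y = (x.1, x.2 / y.1) := by
  rw [xLB, phiP_inv_mul_psiB_mul_phiP, psiInvB_psiB, xRB_eq]

/-- Explicit formula for the Yang–Baxter map of the Borel `SL₂(ℂ)` factorized group:
`R([[1,ε₁],[0,κ₁]], [[1,ε₂],[0,κ₂]]) =
  ([[1, ε₁/κ₂],[0, κ₁]], [[1, (ε₂ + ε₁(κ₂ − κ₂⁻¹))/κ₁],[0, κ₂]])`. -/
theorem RB_explicit (κ₁ κ₂ : ℂˣ) (ε₁ ε₂ : ℂ) :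
    RB ((κ₁, ε₁), (κ₂, ε₂)) =
      ((κ₁, ε₁ / (κ₂ : ℂ)),
       (κ₂, (ε₂ + ε₁ * ((κ₂ : ℂ) - (κ₂ : ℂ)⁻¹)) / (κ₁ : ℂ))) := by
  rw [RB, xLB_eq, xRB_eq]
end
end

section
/- Identify G* with ℂ* × ℂ via (κ, ε) ↔ [[1,ε],[0,κ]] in the Borel SL₂(ℂ) factorized group example. Then the map R : (ℂ*×ℂ)² → (ℂ*×ℂ)² defined by R((κ₁,ε₁),(κ₂,ε₂)) = ((κ₁, ε₁/κ₂), (κ₂, (ε₂ + ε₁(κ₂ − κ₂⁻¹))/κ₁)) is a bijection satisfying the set-theoretical Yang–Baxter equation R₂₃ R₁₃ R₁₂ = R₁₂ R₁₃ R₂₃. -/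
/-- The explicit Yang–Baxter map on `ℂ* × ℂ` coming from the Borel `SL₂(ℂ)` factorized
group: `R((κ₁,ε₁),(κ₂,ε₂)) = ((κ₁, ε₁/κ₂), (κ₂, (ε₂ + ε₁(κ₂ − κ₂⁻¹))/κ₁))`. -/
noncomputable def RBorel : (ℂˣ × ℂ) × (ℂˣ × ℂ) → (ℂˣ × ℂ) × (ℂˣ × ℂ) :=
  fun p =>
    ((p.1.1, p.1.2 / (p.2.1 : ℂ)),
     (p.2.1, (p.2.2 + p.1.2 * ((p.2.1 : ℂ) - (p.2.1 : ℂ)⁻¹)) / (p.1.1 : ℂ)))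

noncomputable def RBorelEquiv : (ℂˣ × ℂ) × (ℂˣ × ℂ) ≃ (ℂˣ × ℂ) × (ℂˣ × ℂ) where
  toFun := RBorel
  invFun p :=
    ((p.1.1, p.1.2 * p.2.1),
     (p.2.1, p.2.2 * p.1.1 - p.1.2 * p.2.1 * ((p.2.1 : ℂ) - (p.2.1 : ℂ)⁻¹)))
  left_inv := by
    rintro ⟨⟨κ₁, ε₁⟩, κ₂, ε₂⟩
    simp only [RBorel, Prod.mk.injEq, true_and]
    exact ⟨by field_simp, by field_simp; ring⟩
  right_inv := by
    rintro ⟨⟨κ₁, ε₁⟩, κ₂, ε₂⟩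
    simp only [RBorel, Prod.mk.injEq, true_and]
    exact ⟨by field_simp, by field_simp; ring⟩

def IsYangBaxter {H : Type*} (R : H × H → H × H) : Prop :=
  map23 R ∘ map13 R ∘ map12 R = map12 R ∘ map13 R ∘ map23 R

/- The `κ`-coordinates stay in place and the `ε`-coordinates transform linearly; the only
non-trivial coordinate, the third `ε`, comes down to `κ₂⁻¹ + (κ₂ - κ₂⁻¹) = κ₂`. -/
theorem isYangBaxter_RBorel : IsYangBaxter RBorel := by
  funext ⟨⟨κ₁, ε₁⟩, ⟨κ₂, ε₂⟩, κ₃, ε₃⟩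
  simp only [map12, map13, map23, RBorel, Function.comp_apply, Prod.mk.injEq, true_and]
  exact ⟨by field_simp, by field_simp, by field_simp; ring⟩

/-- The explicit map `R` on `(ℂ* × ℂ)²` is a bijection satisfying the set-theoretical
Yang–Baxter equation `R₂₃ R₁₃ R₁₂ = R₁₂ R₁₃ R₂₃`. -/
theorem RBorel_bijective_yangBaxter :
    Function.Bijective RBorel ∧
      map23 RBorel ∘ map13 RBorel ∘ map12 RBorel =
        map12 RBorel ∘ map13 RBorel ∘ map23 RBorel :=
  ⟨RBorelEquiv.bijective, isYangBaxter_RBorel⟩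
end

section
/- In the Borel SL₂(ℂ) factorized group, the map s : G* → G* defined by s(x) = ψ⁻¹(φ₋(x)⁻¹ ψ(x) φ₋(x)) is given under the identification G* ≅ ℂ* × ℂ by s(κ, ε) = (κ, ε κ⁻¹). Moreover, for any x ∈ G*, the equation (z, x) = R(x, z) has the unique solution z = s(x). -/
/-!
`ψ(κ, ε) = [[κ, -ε], [0, κ⁻¹]]` is injective, so `ψ⁻¹` (an `invFun`) is a genuine left inverse,
and `s`, `xL`, `xR` are evaluated by checking that the matrix inside `ψ⁻¹` is `ψ` of an explicit
pair. This gives `xL((κ, ε), (κ', ε')) = (κ, ε κ'⁻¹)`, so `xL(x, z) = z` alone forces `z = s(x)`,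
and `xR(x, s(x)) = x` then holds identically.
-/

open Matrix

noncomputable section

/-- The map `s(x) = ψ⁻¹(φ₋(x)⁻¹ ψ(x) φ₋(x))`. -/
def sB (x : ℂˣ × ℂ) : ℂˣ × ℂ := psiInvB ((phiM x)⁻¹ * psiB x * phiM x)

lemma upperTriangular_fin_two_mul {R : Type*} [Semiring R] (a b d a' b' d' : R) :
    !![a, b; 0, d] * !![a', b'; 0, d'] = !![a * a', a * b' + b * d'; 0, d * d'] := by
  simp

lemma upperTriangular_fin_two_eq_iff {α : Type*} [Zero α] {a b d a' b' d' : α} :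
    !![a, b; 0, d] = !![a', b'; 0, d'] ↔ a = a' ∧ b = b' ∧ d = d' := by
  simp [and_assoc]

lemma inv_phiM (p : ℂˣ × ℂ) : (phiM p)⁻¹ = !![1, -p.2 * (p.1 : ℂ)⁻¹; 0, (p.1 : ℂ)⁻¹] :=
  Matrix.inv_eq_right_inv <| by simp [phiM, Matrix.one_fin_two]

lemma inv_phiP (p : ℂˣ × ℂ) : (phiP p)⁻¹ = !![(p.1 : ℂ)⁻¹, 0; 0, 1] :=
  Matrix.inv_eq_right_inv <| by simp [phiP, Matrix.one_fin_two]

lemma psiInvB_eq_of_eq_psiB {A : Matrix (Fin 2) (Fin 2) ℂ} {q : ℂˣ × ℂ} (h : A = psiB q) :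
    psiInvB A = q :=
  h ▸ Function.leftInverse_invFun psiB_injective q

lemma xRB_eq_s8 (a c : ℂˣ) (b d : ℂ) :
    xRB (a, b) (c, d) = (c, (d + b * c - b * (c : ℂ)⁻¹) * (a : ℂ)⁻¹) := by
  refine psiInvB_eq_of_eq_psiB ?_
  rw [inv_phiM, phiM]
  simp only [psiB_eq, upperTriangular_fin_two_mul, upperTriangular_fin_two_eq_iff]
  exact ⟨by ring, by field_simp; ring, by field_simp⟩

lemma xLB_eq_s8 (a c : ℂˣ) (b d : ℂ) : xLB (a, b) (c, d) = (a, b * (c : ℂ)⁻¹) := by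
  refine psiInvB_eq_of_eq_psiB ?_
  rw [xRB_eq_s8, inv_phiP, phiP]
  simp only [psiB_eq, upperTriangular_fin_two_mul, upperTriangular_fin_two_eq_iff]
  exact ⟨by field_simp, by ring, by ring⟩

lemma sB_eq (a : ℂˣ) (b : ℂ) : sB (a, b) = (a, b * (a : ℂ)⁻¹) := by
  refine psiInvB_eq_of_eq_psiB ?_
  rw [inv_phiM, phiM]
  simp only [psiB_eq, upperTriangular_fin_two_mul, upperTriangular_fin_two_eq_iff]
  exact ⟨by ring, by field_simp; ring, by field_simp⟩

lemma xRB_sB (x : ℂˣ × ℂ) : xRB x (sB x) = x := by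
  obtain ⟨a, b⟩ := x
  rw [sB_eq, xRB_eq_s8, Prod.mk.injEq]
  refine ⟨rfl, ?_⟩
  field_simp
  ring

lemma xLB_eq_self_iff (x z : ℂˣ × ℂ) : xLB x z = z ↔ z = sB x := by
  obtain ⟨a, b⟩ := x
  obtain ⟨c, d⟩ := z
  rw [xLB_eq_s8, sB_eq, Prod.mk.injEq, Prod.mk.injEq]
  constructor <;> rintro ⟨rfl, rfl⟩ <;> exact ⟨rfl, rfl⟩

/-- In the Borel `SL₂(ℂ)` factorized group, `s(κ, ε) = (κ, ε κ⁻¹)`, and for every `x`,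
`z = s(x)` is the unique solution of `R(x, z) = (z, x)`. -/
theorem sB_explicit_and_unique :
    (∀ (κ : ℂˣ) (ε : ℂ), sB (κ, ε) = (κ, ε * (κ : ℂ)⁻¹)) ∧
      ∀ x z : ℂˣ × ℂ, RB (x, z) = (z, x) ↔ z = sB x := by
  refine ⟨sB_eq, fun x z => ?_⟩
  rw [RB, Prod.mk.injEq, xLB_eq_self_iff]
  constructor
  · exact And.left
  · rintro rfl
    exact ⟨rfl, xRB_sB x⟩
end
end

section
/- Let ξ = e^{2πi/N}, r as above, and σ = ξ^{−r(r−1)/2}. For x = ξ^α, the following identity of complex numbers holds: [α]_ξ [α−1]_ξ ⋯ [α−r+1]_ξ = σ [rα]_ξ, where [y]_ξ = ξ^y − ξ^{−y} with ξ^y = e^{2πiy/N}. -/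
open Finset Complex Real

/-! Writing `ξ^y = e^{ty}` with `t = 2πi/N`, each factor splits as
`[α − k]_ξ = ξ^{−α−k} (ξ^{2α} − ξ^{2k})`. Now `r` is exactly the order of `ξ²`, so the `ξ^{2k}` with `k < r` are all the roots of
`X^r − 1` and the second factors multiply to `ξ^{2rα} − 1`; the prefactors multiply to
`ξ^{−rα} ξ^{−r(r−1)/2}`, which leaves `σ [rα]_ξ`. This works for any `t` with `e^{2t}` a
primitive `r`-th root of unity. -/

/-- The quantum number `[y]_ξ = ξ^y − ξ^{−y}` where `ξ^y = e^{2πiy/N}`. -/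
noncomputable def qbr (N : ℕ) (y : ℂ) : ℂ :=
  Complex.exp (2 * Real.pi * Complex.I * y / N) -
    Complex.exp (-(2 * Real.pi * Complex.I * y / N))

theorem IsPrimitiveRoot.prod_range_sub_pow {R : Type*} [CommRing R] [IsDomain R] {ζ : R} {n : ℕ}
    (hζ : IsPrimitiveRoot ζ n) (hn : 0 < n) (w : R) :
    ∏ k ∈ range n, (w - ζ ^ k) = w ^ n - 1 := by
  simpa [Polynomial.eval_prod] using
    (congrArg (Polynomial.eval w) (X_pow_sub_C_eq_prod hζ hn (one_pow n))).symm

theorem Finset.sum_range_natCast_mul_two {R : Type*} [CommRing R] (n : ℕ) :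
    (∑ i ∈ range n, (i : R)) * 2 = n * (n - 1) := by
  induction n with
  | zero => simp
  | succ n ih => rw [sum_range_succ, add_mul, ih]; push_cast; ring

theorem Complex.isPrimitiveRoot_exp_two_mul_two_pi_I_div {N : ℕ} (hN : 0 < N) :
    IsPrimitiveRoot (exp (2 * (2 * π * I / N))) (if Even N then N / 2 else N) := by
  have hζ := isPrimitiveRoot_exp N hN.ne'
  rw [show (2 : ℂ) * (2 * π * I / N) = (2 : ℕ) * (2 * π * I / N) by norm_num, exp_nat_mul]
  split_ifs with hN2
  · exact hζ.pow_of_dvd two_ne_zero (even_iff_two_dvd.mp hN2)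
  · exact hζ.pow_of_coprime 2 (Nat.coprime_two_left.mpr (Nat.not_even_iff_odd.mp hN2))

theorem Complex.prod_range_exp_sub_exp_neg {t : ℂ} {r : ℕ} (hr : 0 < r)
    (ht : IsPrimitiveRoot (exp (2 * t)) r) (α : ℂ) :
    ∏ k ∈ range r, (exp (t * (α - k)) - exp (-(t * (α - k)))) =
      exp (-(t * (r * (r - 1) / 2))) * (exp (t * (r * α)) - exp (-(t * (r * α)))) := by
  have hfactor : ∀ k ∈ range r, exp (t * (α - k)) - exp (-(t * (α - k))) =
      exp (-(t * α) - t * k) * (exp (2 * t * α) - exp (2 * t) ^ k) := by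
    intro k _
    rw [← exp_nat_mul, mul_sub (exp _), ← exp_add, ← exp_add]
    congr 1 <;> ring_nf
  have hsum : ∑ k ∈ range r, (k : ℂ) = r * (r - 1) / 2 := by
    rw [← sum_range_natCast_mul_two]; ring
  rw [prod_congr rfl hfactor, prod_mul_distrib, ← exp_sum, ht.prod_range_sub_pow hr,
    sum_sub_distrib, sum_const, card_range, nsmul_eq_mul, ← mul_sum, hsum, ← exp_nat_mul,
    mul_sub (exp _), mul_one, mul_sub (exp _), ← exp_add, ← exp_add, ← exp_add]
  congr 1 <;> congr 1 <;> ring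

theorem qbr_eq_exp_sub_exp_neg (N : ℕ) (y : ℂ) :
    qbr N y = exp (2 * π * I / N * y) - exp (-(2 * π * I / N * y)) := by
  rw [qbr, div_mul_eq_mul_div]

/-- For `ξ = e^{2πi/N}`, `r = N/2` if `N` even and `r = N` if `N` odd, and
`σ = ξ^{−r(r−1)/2}`, one has `[α]_ξ [α−1]_ξ ⋯ [α−r+1]_ξ = σ [rα]_ξ` for all `α ∈ ℂ`. -/
theorem qfalling_factorial_eq (N : ℕ) (hN : 0 < N)
    (r : ℕ) (hr : r = if Even N then N / 2 else N) (α : ℂ) :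
    ∏ k ∈ Finset.range r, qbr N (α - k) =
      Complex.exp (2 * Real.pi * Complex.I *
          (-((r : ℂ) * ((r : ℂ) - 1) / 2)) / N) *
        qbr N (r * α) := by
  have hr0 : 0 < r := by
    rw [hr]
    split_ifs with hN2
    · obtain ⟨m, rfl⟩ := hN2
      omega
    · exact hN
  have hζ : IsPrimitiveRoot (exp (2 * (2 * π * I / N))) r := by
    rw [hr]
    exact isPrimitiveRoot_exp_two_mul_two_pi_I_div hN
  simp only [qbr_eq_exp_sub_exp_neg]
  rw [prod_range_exp_sub_exp_neg hr0 hζ α]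
  congr 2
  ring
end

section
/- Let ξ = e^{2πi/N} with r defined as the smallest positive integer with ξ^r = ±1 ([r]_ξ = 0), and σ = ξ^{−r(r−1)/2}. Then the limit as q → ξ of the quantum binomial coefficient qbinom(ℓr + k, k)_q equals ξ^{rℓk} for all ℓ ∈ ℤ and 0 ≤ k < r, and the limit of qbinom((ℓ+1)r, r)_q equals ξ^{r²ℓ}(ℓ+1). -/
/-!
The number `r` is the order of `ξ²`, so `ξ^r = ±1` and `[m]_ξ ≠ 0` for `0 < m < r`. Hence shifting
the argument of a quantum integer by `r s` multiplies its value at `ξ` by `ξ^{rs}`, while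
`[r s]_ξ = 0`. For `k < r` the denominator of `qbinom(ℓr + k, k)_q` does not vanish at `ξ`, so the
limit is the value `ξ^{rℓk} qbinom(k, k)_ξ = ξ^{rℓk}`. For `k = r` we split off the `0/0` factor
`[(ℓ+1)r]_q / [r]_q`, whose limit is the quotient of derivatives `(ℓ+1) ξ^{rℓ}`; what remains is
`qbinom(ℓr + (r-1), r-1)_q`, covered by the first case.
-/

open Filter Topology

/-- The quantum integer `[m]_q = q^m − q^{−m}` for `m : ℤ` and `q : ℂ`. -/
noncomputable def qIntC (q : ℂ) (m : ℤ) : ℂ := q ^ m - q ^ (-m)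

/-- The quantum binomial coefficient
`qbinom(m, k)_q = ([m]_q [m−1]_q ⋯ [m−k+1]_q) / [k]_q!`. -/
noncomputable def qBinomC (q : ℂ) (m : ℤ) (k : ℕ) : ℂ :=
  (∏ j ∈ Finset.range k, qIntC q (m - j)) /
    ∏ j ∈ Finset.range k, qIntC q ((j : ℤ) + 1)

open Finset

theorem IsPrimitiveRoot.orderOf_sq {M : Type*} [CommMonoid M] {ζ : M} {N : ℕ}
    (h : IsPrimitiveRoot ζ N) : orderOf (ζ ^ 2) = if Even N then N / 2 else N := by
  rw [orderOf_pow' ζ two_ne_zero, ← h.eq_orderOf]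
  split_ifs with hN
  · rw [Nat.gcd_eq_right (even_iff_two_dvd.mp hN)]
  · rw [Nat.Coprime.gcd_eq_one (Nat.coprime_two_right.mpr (Nat.not_even_iff_odd.mp hN)),
      Nat.div_one]

theorem tendsto_div_of_hasDerivAt_of_eq_zero {𝕜 : Type*} [NontriviallyNormedField 𝕜]
    {f g : 𝕜 → 𝕜} {a b x : 𝕜} (hf : HasDerivAt f a x) (hg : HasDerivAt g b x)
    (hf0 : f x = 0) (hg0 : g x = 0) (hb : b ≠ 0) :
    Tendsto (fun y => f y / g y) (𝓝[≠] x) (𝓝 (a / b)) := by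
  refine ((hasDerivAt_iff_tendsto_slope.mp hf).div
    (hasDerivAt_iff_tendsto_slope.mp hg) hb).congr' ?_
  filter_upwards [self_mem_nhdsWithin] with y hy
  rw [Pi.div_apply, slope_def_field, slope_def_field, hf0, hg0, sub_zero, sub_zero,
    div_div_div_cancel_right₀ (sub_ne_zero.mpr hy)]

theorem qIntC_eq_zero_iff {q : ℂ} (hq : q ≠ 0) (m : ℤ) : qIntC q m = 0 ↔ (q ^ 2) ^ m = 1 := by
  have h : qIntC q m = q ^ (-m) * ((q ^ 2) ^ m - 1) := by
    rw [qIntC, mul_sub, mul_one, ← zpow_natCast, ← zpow_mul, ← zpow_add₀ hq]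
    ring_nf
  rw [h, mul_eq_zero, sub_eq_zero, or_iff_right (zpow_ne_zero _ hq)]

theorem prod_range_qIntC_succ_ne_zero {q : ℂ} (hq : q ≠ 0) {k : ℕ} (hk : k < orderOf (q ^ 2)) :
    ∏ j ∈ range k, qIntC q ((j : ℤ) + 1) ≠ 0 := by
  refine prod_ne_zero_iff.mpr fun j hj h => ?_
  rw [← Nat.cast_succ, qIntC_eq_zero_iff hq, zpow_natCast] at h
  exact pow_ne_one_of_lt_orderOf j.succ_ne_zero (by simp at hj; omega) h

theorem prod_range_qIntC_sub (q : ℂ) (n : ℕ) :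
    ∏ j ∈ range n, qIntC q (n - j) = ∏ j ∈ range n, qIntC q ((j : ℤ) + 1) := by
  rw [← prod_range_reflect]
  refine prod_congr rfl fun j hj => ?_
  rw [mem_range] at hj
  congr 1
  omega

theorem hasDerivAt_qIntC {ξ : ℂ} (hξ : ξ ≠ 0) (m : ℤ) :
    HasDerivAt (fun q => qIntC q m) (m * (ξ ^ (m - 1) + ξ ^ (-m - 1))) ξ := by
  refine ((hasDerivAt_zpow m ξ (.inl hξ)).sub (hasDerivAt_zpow (-m) ξ (.inl hξ))).congr_deriv ?_
  push_cast
  ring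

section PowTwoMulEqOne

variable {ξ : ℂ} {r : ℕ} (hξ : ξ ≠ 0) (hr : ξ ^ (2 * r) = 1)
include hξ hr

theorem zpow_neg_mul_of_pow_two_mul_eq_one (s : ℤ) : ξ ^ (-(r * s)) = ξ ^ ((r : ℤ) * s) := by
  refine (zpow_neg ξ _).trans (inv_eq_of_mul_eq_one_left ?_)
  rw [← zpow_add₀ hξ, ← two_mul, ← mul_assoc, zpow_mul]
  exact_mod_cast (congrArg (· ^ s) hr).trans (one_zpow s)

theorem qIntC_add_mul (m s : ℤ) : qIntC ξ (m + r * s) = ξ ^ ((r : ℤ) * s) * qIntC ξ m := by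
  rw [qIntC, qIntC, neg_add, zpow_add₀ hξ, zpow_add₀ hξ,
    zpow_neg_mul_of_pow_two_mul_eq_one hξ hr]
  ring

theorem qIntC_mul_eq_zero (s : ℤ) : qIntC ξ (r * s) = 0 := by
  simpa [qIntC] using qIntC_add_mul hξ hr 0 s

theorem hasDerivAt_qIntC_mul (s : ℤ) :
    HasDerivAt (fun q => qIntC q (r * s)) (2 * (r * s) * ξ ^ ((r : ℤ) * s - 1)) ξ := by
  refine (hasDerivAt_qIntC hξ _).congr_deriv ?_
  rw [sub_eq_add_neg, sub_eq_add_neg, zpow_add₀ hξ, zpow_add₀ hξ,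
    zpow_neg_mul_of_pow_two_mul_eq_one hξ hr]
  push_cast
  ring

theorem tendsto_qIntC_mul_div_qIntC (hr0 : r ≠ 0) (s : ℤ) :
    Tendsto (fun q => qIntC q (r * s) / qIntC q r) (𝓝[≠] ξ)
      (𝓝 (s * ξ ^ ((r : ℤ) * (s - 1)))) := by
  have hden := hasDerivAt_qIntC_mul hξ hr 1
  have hzero := qIntC_mul_eq_zero hξ hr 1
  rw [mul_one] at hden hzero
  convert tendsto_div_of_hasDerivAt_of_eq_zero (hasDerivAt_qIntC_mul hξ hr s) hden
    (qIntC_mul_eq_zero hξ hr s) hzero (by simp [hr0, zpow_ne_zero _ hξ]) using 2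
  rw [show (r : ℤ) * s - 1 = r * (s - 1) + (r - 1) by ring, zpow_add₀ hξ]
  push_cast
  field_simp

theorem qBinomC_add_mul (m s : ℤ) (k : ℕ) :
    qBinomC ξ (m + r * s) k = ξ ^ ((r : ℤ) * s * k) * qBinomC ξ m k := by
  have hshift (j : ℕ) : qIntC ξ (m + r * s - j) = ξ ^ ((r : ℤ) * s) * qIntC ξ (m - j) := by
    rw [← qIntC_add_mul hξ hr]
    ring_nf
  simp only [qBinomC, hshift, prod_mul_distrib, prod_const, card_range, mul_div_assoc]
  rw [← zpow_natCast, ← zpow_mul]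

end PowTwoMulEqOne

theorem qBinomC_self {q : ℂ} {k : ℕ} (h : ∏ j ∈ range k, qIntC q ((j : ℤ) + 1) ≠ 0) :
    qBinomC q k k = 1 := by
  rw [qBinomC, prod_range_qIntC_sub, div_self h]

theorem qBinomC_succ (q : ℂ) (m : ℤ) (k : ℕ) :
    qBinomC q m (k + 1) = qIntC q m / qIntC q (k + 1) * qBinomC q (m - 1) k := by
  rw [qBinomC, qBinomC, prod_range_succ', prod_range_succ, div_mul_div_comm]
  simp only [Nat.cast_add, Nat.cast_one, Nat.cast_zero, sub_zero, sub_sub, add_comm (1 : ℤ)]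
  ring

theorem continuousAt_qBinomC {ξ : ℂ} (hξ : ξ ≠ 0) {k : ℕ}
    (h : ∏ j ∈ range k, qIntC ξ ((j : ℤ) + 1) ≠ 0) (m : ℤ) :
    ContinuousAt (fun q => qBinomC q m k) ξ := by
  have hcont (n : ℤ) : ContinuousAt (fun q => qIntC q n) ξ := (hasDerivAt_qIntC hξ n).continuousAt
  exact (tendsto_finsetProd _ fun j _ => hcont _).div
    (tendsto_finsetProd _ fun j _ => hcont _) h

theorem pow_two_mul_orderOf_sq (ξ : ℂ) : ξ ^ (2 * orderOf (ξ ^ 2)) = 1 := by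
  rw [pow_mul, pow_orderOf_eq_one]

theorem tendsto_qBinomC_add_mul {ξ : ℂ} {r k : ℕ} (hξ : ξ ≠ 0) (hr : ξ ^ (2 * r) = 1)
    (hk : k < orderOf (ξ ^ 2)) (s : ℤ) :
    Tendsto (fun q => qBinomC q (k + r * s) k) (𝓝[≠] ξ) (𝓝 (ξ ^ ((r : ℤ) * s * k))) := by
  have hden := prod_range_qIntC_succ_ne_zero hξ hk
  have hval : qBinomC ξ (k + r * s) k = ξ ^ ((r : ℤ) * s * k) := by
    rw [qBinomC_add_mul hξ hr, qBinomC_self hden, mul_one]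
  exact hval ▸ (continuousAt_qBinomC hξ hden _).tendsto.mono_left nhdsWithin_le_nhds

theorem tendsto_qBinomC_mul {ξ : ℂ} {r : ℕ} (hξ : ξ ≠ 0) (hr : orderOf (ξ ^ 2) = r)
    (hr0 : r ≠ 0) (s : ℤ) :
    Tendsto (fun q => qBinomC q (r * s) r) (𝓝[≠] ξ)
      (𝓝 (s * ξ ^ ((r : ℤ) ^ 2 * (s - 1)))) := by
  have h2r : ξ ^ (2 * r) = 1 := hr ▸ pow_two_mul_orderOf_sq ξ
  obtain ⟨k, rfl⟩ := Nat.exists_eq_add_one_of_ne_zero hr0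
  have hlim := (tendsto_qIntC_mul_div_qIntC hξ h2r hr0 s).mul
    (tendsto_qBinomC_add_mul hξ h2r (hr.symm ▸ k.lt_add_one) (s - 1))
  have hfun (q : ℂ) : qBinomC q (↑(k + 1) * s) (k + 1)
      = qIntC q (↑(k + 1) * s) / qIntC q ↑(k + 1) * qBinomC q (k + ↑(k + 1) * (s - 1)) k := by
    rw [qBinomC_succ]
    congr 2
    push_cast
    ring
  have hval : s * ξ ^ (↑(k + 1) * (s - 1)) * ξ ^ (↑(k + 1) * (s - 1) * k)
      = s * ξ ^ ((↑(k + 1) : ℤ) ^ 2 * (s - 1)) := by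
    rw [mul_assoc, ← zpow_add₀ hξ]
    congr 2
    push_cast
    ring
  simpa only [hfun, hval] using hlim

/-- At `ξ = e^{2πi/N}` (with `r` minimal with `[r]_ξ = 0`), the quantum binomial
coefficients have the limits `qbinom(ℓr + k, k)_q → ξ^{rℓk}` for `0 ≤ k < r` and
`qbinom((ℓ+1)r, r)_q → ξ^{r²ℓ}(ℓ+1)` as `q → ξ`. -/
theorem qbinom_root_of_unity_limits (N : ℕ) (hN : 0 < N)
    (ξ : ℂ) (hξ : ξ = Complex.exp (2 * Real.pi * Complex.I / N))
    (r : ℕ) (hr : r = if Even N then N / 2 else N)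
    (ℓ : ℤ) (k : ℕ) (hk : k < r) :
    Tendsto (fun q : ℂ => qBinomC q (ℓ * r + k) k) (𝓝[≠] ξ)
      (𝓝 (ξ ^ ((r : ℤ) * ℓ * k))) ∧
    Tendsto (fun q : ℂ => qBinomC q ((ℓ + 1) * r) r) (𝓝[≠] ξ)
      (𝓝 (ξ ^ ((r : ℤ) ^ 2 * ℓ) * ((ℓ : ℂ) + 1))) := by
  have hξ0 : ξ ≠ 0 := hξ ▸ Complex.exp_ne_zero _
  have hord : orderOf (ξ ^ 2) = r :=
    hr ▸ (hξ ▸ Complex.isPrimitiveRoot_exp N hN.ne').orderOf_sq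
  constructor
  · simpa only [add_comm, mul_comm (ℓ : ℤ)] using
      tendsto_qBinomC_add_mul hξ0 (hord ▸ pow_two_mul_orderOf_sq ξ) (hord ▸ hk) ℓ
  · simpa only [mul_comm _ (r : ℤ), add_sub_cancel_right, mul_comm _ ((ℓ : ℂ) + 1),
      Int.cast_add, Int.cast_one] using tendsto_qBinomC_mul hξ0 hord (by omega) (ℓ + 1)
end

section
/- For the 4×4 matrix R(a,b,t) = [[iab,0,0,0],[0,b,ib(a+a⁻¹),0],[0,0,a,0],[4it(a−a⁻¹),0,0,i]] with a,b ∈ ℂ*, t ∈ ℂ, regarded as an operator on ℂ²⊗ℂ², the following parameter-dependent Yang–Baxter relation holds on ℂ²⊗ℂ²⊗ℂ²: R₁₂(a,b,−t₁/c²) R₁₃(a,c,t₁) R₂₃(b,c,t₂) = R₂₃(b,c,(t₁(a⁴−1)−t₂a²)/a⁴) R₁₃(a,c,−t₁/b²) R₁₂(a,b,t₁). -/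
open Complex

/-- Lexicographic identification `(Fin 2) × (Fin 2) ≃ Fin 4`
(`e₀⊗e₀, e₀⊗e₁, e₁⊗e₀, e₁⊗e₁`). -/
def pairIdx (p : Fin 2 × Fin 2) : Fin 4 := ⟨2 * p.1.val + p.2.val, by omega⟩

/-- The holonomy `R`-matrix
`R(a,b,t) = [[iab,0,0,0],[0,b,ib(a+a⁻¹),0],[0,0,a,0],[4it(a−a⁻¹),0,0,i]]`
regarded as an operator on `ℂ² ⊗ ℂ²`. -/
noncomputable def Rhol (a b : ℂˣ) (t : ℂ) :
    Matrix (Fin 2 × Fin 2) (Fin 2 × Fin 2) ℂ :=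
  fun p q =>
    (!![I * a * b, 0, 0, 0;
        0, (b : ℂ), I * b * ((a : ℂ) + (a : ℂ)⁻¹), 0;
        0, 0, (a : ℂ), 0;
        4 * I * t * ((a : ℂ) - (a : ℂ)⁻¹), 0, 0, I] : Matrix (Fin 4) (Fin 4) ℂ)
      (pairIdx p) (pairIdx q)

/-- `M₁₂ = M ⊗ Id` on `ℂ² ⊗ ℂ² ⊗ ℂ²`. -/
def op12 (M : Matrix (Fin 2 × Fin 2) (Fin 2 × Fin 2) ℂ) :
    Matrix (Fin 2 × Fin 2 × Fin 2) (Fin 2 × Fin 2 × Fin 2) ℂ :=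
  fun p q => M (p.1, p.2.1) (q.1, q.2.1) * (if p.2.2 = q.2.2 then 1 else 0)

/-- `M₁₃`: act on the first and third tensor factors. -/
def op13 (M : Matrix (Fin 2 × Fin 2) (Fin 2 × Fin 2) ℂ) :
    Matrix (Fin 2 × Fin 2 × Fin 2) (Fin 2 × Fin 2 × Fin 2) ℂ :=
  fun p q => M (p.1, p.2.2) (q.1, q.2.2) * (if p.2.1 = q.2.1 then 1 else 0)

/-- `M₂₃ = Id ⊗ M` on `ℂ² ⊗ ℂ² ⊗ ℂ²`. -/
def op23 (M : Matrix (Fin 2 × Fin 2) (Fin 2 × Fin 2) ℂ) :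
    Matrix (Fin 2 × Fin 2 × Fin 2) (Fin 2 × Fin 2 × Fin 2) ℂ :=
  fun p q => M (p.2.1, p.2.2) (q.2.1, q.2.2) * (if p.1 = q.1 then 1 else 0)

/-!
Writing out the matrix products, an entry of `R₁₂ R₁₃ R₂₃` or of `R₂₃ R₁₃ R₁₂` is a sum of eight
products of three entries of `R`. Apart from its diagonal, `R(a,b,t)` has only the entries
`e₁₀ ↦ e₀₁` and `e₀₀ ↦ e₁₁`, and only the second depends on `t`; the parameter substitutions are
exactly what makes the `t`-dependent entries agree, e.g. at `(e₀₁₁, e₀₀₀)` both sides equal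
`4ic (t₂(b² − 1) − t₁b²(a² − a⁻²))`. After clearing the denominators `a`, `b`, `c`, every entry
is a polynomial identity in `a, b, c, t₁, t₂, i` modulo `i² = −1`.
-/

lemma op12_mul_op13_mul_op23_apply (A B C : Matrix (Fin 2 × Fin 2) (Fin 2 × Fin 2) ℂ)
    (x₁ x₂ x₃ y₁ y₂ y₃ : Fin 2) :
    (op12 A * op13 B * op23 C) (x₁, x₂, x₃) (y₁, y₂, y₃) =
      ∑ u, ∑ r, ∑ s, A (x₁, x₂) (u, r) * B (u, x₃) (y₁, s) * C (r, s) (y₂, y₃) := by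
  simp only [Matrix.mul_apply, op12, mul_ite, mul_one, mul_zero, op13, ite_mul, zero_mul,
    Fintype.sum_prod_type, Finset.sum_ite_irrel, Finset.sum_ite_eq, Finset.mem_univ, ↓reduceIte,
    Finset.sum_const_zero, Finset.sum_ite_eq', Fin.sum_univ_two, Fin.isValue, op23, Prod.mk.eta]
  ring

lemma op23_mul_op13_mul_op12_apply (A B C : Matrix (Fin 2 × Fin 2) (Fin 2 × Fin 2) ℂ)
    (x₁ x₂ x₃ y₁ y₂ y₃ : Fin 2) :
    (op23 C * op13 B * op12 A) (x₁, x₂, x₃) (y₁, y₂, y₃) =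
      ∑ u, ∑ r, ∑ s, C (x₂, x₃) (r, s) * B (x₁, s) (u, y₃) * A (u, r) (y₁, y₂) := by
  simp only [Matrix.mul_apply, op23, Prod.mk.eta, mul_ite, mul_one, mul_zero, op13, ite_mul,
    zero_mul, Fintype.sum_prod_type, Finset.sum_ite_irrel, Fin.sum_univ_two, Fin.isValue,
    Finset.sum_const_zero, Finset.sum_ite_eq', Finset.mem_univ, ↓reduceIte, Finset.sum_ite_eq, op12]
  ring

/-- The parameter-dependent (holonomy) Yang–Baxter relation for the `N = 4` holonomy
`R`-matrix of semi-cyclic `U_i(sl₂)`-modules: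
`R₁₂(a,b,−t₁/c²) R₁₃(a,c,t₁) R₂₃(b,c,t₂)
  = R₂₃(b,c,(t₁(a⁴−1)−t₂a²)/a⁴) R₁₃(a,c,−t₁/b²) R₁₂(a,b,t₁)`. -/
theorem holonomy_yangBaxter_N4 (a b c : ℂˣ) (t₁ t₂ : ℂ) :
    op12 (Rhol a b (-t₁ / (c : ℂ) ^ 2)) * op13 (Rhol a c t₁) * op23 (Rhol b c t₂) =
      op23 (Rhol b c ((t₁ * ((a : ℂ) ^ 4 - 1) - t₂ * (a : ℂ) ^ 2) / (a : ℂ) ^ 4)) *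
        op13 (Rhol a c (-t₁ / (b : ℂ) ^ 2)) * op12 (Rhol a b t₁) := by
  have ha := a.ne_zero
  have hb := b.ne_zero
  have hc := c.ne_zero
  ext ⟨x₁, x₂, x₃⟩ ⟨y₁, y₂, y₃⟩
  rw [op12_mul_op13_mul_op23_apply, op23_mul_op13_mul_op12_apply]
  simp only [Fin.sum_univ_two]
  fin_cases x₁ <;> fin_cases x₂ <;> fin_cases x₃ <;> fin_cases y₁ <;> fin_cases y₂ <;>
    fin_cases y₃ <;> simp [Rhol, pairIdx] <;> field_simp <;> ring_nf <;> simp only [I_sq] <;> ring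
end
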